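/- arXiv:1706.02925 — 10 statements merged into one kernel-verified Lean document; each statement's English description precedes it below -/
import Mathlib

section
/- Let a, b, c, d, e be nonzero integers. Define the Laurent polynomials f(x) = x + a + b/x and g(y) = y^2 + c*y + d + e/y. Then either the equation z^2 = f(x)^2 + g(y)^2 has infinitely many nontrivial solutions (x, y, z) in the rational function field ℚ(T) with x ≠ 0, y ≠ 0 and f(x)·g(y) ≠ 0, or the equation z^2 = f(x)^2 - g(y)^2 has infinitely many nontrivial solutions (x, y, z) in ℚ(T) with x ≠ 0, y ≠ 0 and f(x)^2 ≠ g(y)^2. -/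
/-!
Only the second equation is needed. Since `(x + u)^2 - (x - u)^2 = 4xu`, taking
`x = (g(y)^2 - 4b) / (4a)` gives `f(x)^2 - (x - a - b/x)^2 = 4ax + 4b = g(y)^2`, so
`(x, y, x - a - b/x)` is a solution for every `y`. It is nontrivial as soon as `x ≠ 0` and
`x^2 - ax - b ≠ 0`, and both hold when `y` is transcendental over `ℚ`: then so is `g(y)`,
because `y` is a root of `Y^3 + cY^2 + (d - g(y))Y + e`, and hence so is `x`. The elements
`T + n` of `ℚ(T)` are transcendental and pairwise distinct.
-/

open Polynomial IntermediateField

section Transcendence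

variable {F L : Type*} [Field F] [Field L] [Algebra F L]

theorem Transcendental.aeval_ne_zero {x : L} (hx : Transcendental F x) {p : F[X]}
    (hp : p ≠ 0) : Polynomial.aeval x p ≠ 0 :=
  fun h ↦ hx ⟨p, hp, h⟩

theorem Transcendental.add_algebraMap {y : L} (hy : Transcendental F y) (r : F) :
    Transcendental F (y + algebraMap F L r) := by
  have := hy.aeval (X + C r) (by rw [natDegree_X_add_C]; simp)
    (by rw [leadingCoeff_X_add_C]; simp)
  rwa [map_add, aeval_X, aeval_C] at this

theorem Transcendental.of_mul_eq_aeval {y g : L} (hy : Transcendental F y) {p : F[X]}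
    (hp : 2 ≤ p.natDegree) (h : g * y = Polynomial.aeval y p) : Transcendental F g := by
  intro hg
  have : Algebra.IsAlgebraic F F⟮g⟯ := isAlgebraic_adjoin_simple hg.isIntegral
  refine hy.extendScalars F⟮g⟯
    ⟨p.map (algebraMap F F⟮g⟯) - C (AdjoinSimple.gen F g) * X, fun h0 ↦ ?_, by simp [h]⟩
  have := congrArg (coeff · p.natDegree) h0
  simp [coeff_C_mul, coeff_X, show 1 ≠ p.natDegree by omega] at this
  simp [this] at hp

theorem Transcendental.sq_add_mul_add_add_div {y : L} (hy : Transcendental F y) (c d e : F) :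
    Transcendental F
      (y ^ 2 + algebraMap F L c * y + algebraMap F L d + algebraMap F L e / y) := by
  have hdeg : (X ^ 3 + C c * X ^ 2 + C d * X + C e).natDegree = 3 := by compute_degree!
  refine hy.of_mul_eq_aeval (p := X ^ 3 + C c * X ^ 2 + C d * X + C e) (by omega) ?_
  have hy0 : y ≠ 0 := by simpa using hy.aeval_ne_zero X_ne_zero
  simp only [map_add, map_mul, map_pow, aeval_X, aeval_C]
  field_simp

theorem Transcendental.sq_sub_div {g : L} (hg : Transcendental F g) (u : F) {v : F}
    (hv : v ≠ 0) : Transcendental F ((g ^ 2 - algebraMap F L u) / algebraMap F L v) := by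
  have hdeg : (C v⁻¹ * (X ^ 2 - C u)).natDegree = 2 := by compute_degree!
  have := hg.aeval (C v⁻¹ * (X ^ 2 - C u)) (by omega) ?_
  · simpa [div_eq_inv_mul] using this
  · rw [leadingCoeff, hdeg]
    simp [coeff_C_mul, hv]

end Transcendence

section DifferenceOfSquares

variable {K : Type*} [Field K]

def diffSolutions (a b c d e : K) : Set (K × K × K) :=
  {p | p.1 ≠ 0 ∧ p.2.1 ≠ 0 ∧
      (p.1 + a + b / p.1) ^ 2 ≠ (p.2.1 ^ 2 + c * p.2.1 + d + e / p.2.1) ^ 2 ∧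
      p.2.2 ^ 2 = (p.1 + a + b / p.1) ^ 2 - (p.2.1 ^ 2 + c * p.2.1 + d + e / p.2.1) ^ 2}

noncomputable def diffSolution (a b c d e y : K) : K × K × K :=
  let x := ((y ^ 2 + c * y + d + e / y) ^ 2 - 4 * b) / (4 * a)
  (x, y, x - a - b / x)

theorem sq_sub_sub_div_eq {a b g x : K} (hx : x ≠ 0) (h : 4 * a * x + 4 * b = g ^ 2) :
    (x - a - b / x) ^ 2 = (x + a + b / x) ^ 2 - g ^ 2 := by
  rw [← h]
  field_simp
  ring

theorem mk_mem_diffSolutions {a b c d e x y : K} (hx : x ≠ 0) (hy : y ≠ 0)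
    (hxab : x ^ 2 - a * x - b ≠ 0) (h : 4 * a * x + 4 * b = (y ^ 2 + c * y + d + e / y) ^ 2) :
    (x, y, x - a - b / x) ∈ diffSolutions a b c d e := by
  have hsq := sq_sub_sub_div_eq hx h
  refine ⟨hx, hy, fun hfg ↦ ?_, hsq⟩
  rw [hfg, sub_self, sq_eq_zero_iff, ← mul_right_inj' hx, mul_zero] at hsq
  exact hxab (by rw [← hsq]; field_simp)

end DifferenceOfSquares

theorem diffSolution_mem_diffSolutions {F L : Type*} [Field F] [Field L] [Algebra F L]
    {a : F} (h4a : 4 * a ≠ 0) (b c d e : F) {y : L} (hy : Transcendental F y) :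
    diffSolution (algebraMap F L a) (algebraMap F L b) (algebraMap F L c) (algebraMap F L d)
        (algebraMap F L e) y ∈
      diffSolutions (algebraMap F L a) (algebraMap F L b) (algebraMap F L c) (algebraMap F L d)
        (algebraMap F L e) := by
  have hg := hy.sq_add_mul_add_add_div c d e
  set g := y ^ 2 + algebraMap F L c * y + algebraMap F L d + algebraMap F L e / y
  have hx := hg.sq_sub_div (4 * b) h4a
  set x := (g ^ 2 - algebraMap F L (4 * b)) / algebraMap F L (4 * a)
  have hx0 : x ≠ 0 := by simpa using hx.aeval_ne_zero X_ne_zero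
  have hy0 : y ≠ 0 := by simpa using hy.aeval_ne_zero X_ne_zero
  have hxab : x ^ 2 - algebraMap F L a * x - algebraMap F L b ≠ 0 := by
    have hdeg : (X ^ 2 - C a * X - C b).natDegree = 2 := by compute_degree!
    have := hx.aeval_ne_zero (p := X ^ 2 - C a * X - C b)
      (ne_zero_of_natDegree_gt (n := 0) (by omega))
    simpa only [map_sub, map_mul, map_pow, aeval_X, aeval_C] using this
  have hxg : 4 * algebraMap F L a * x + 4 * algebraMap F L b = g ^ 2 := by
    have : x * algebraMap F L (4 * a) = g ^ 2 - algebraMap F L (4 * b) :=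
      div_mul_cancel₀ _ ((_root_.map_ne_zero (algebraMap F L)).mpr h4a)
    simp only [map_mul, map_ofNat] at this
    linear_combination this
  simpa [diffSolution, x, g, map_ofNat] using mk_mem_diffSolutions hx0 hy0 hxab hxg

theorem stmt0_general (a b c d e : ℤ) (ha : a ≠ 0) :
    {p : RatFunc ℚ × RatFunc ℚ × RatFunc ℚ |
      p.1 ≠ 0 ∧ p.2.1 ≠ 0 ∧
      (p.1 + a + b / p.1) * (p.2.1 ^ 2 + c * p.2.1 + d + e / p.2.1) ≠ 0 ∧
      p.2.2 ^ 2 = (p.1 + a + b / p.1) ^ 2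
        + (p.2.1 ^ 2 + c * p.2.1 + d + e / p.2.1) ^ 2}.Infinite ∨
    {p : RatFunc ℚ × RatFunc ℚ × RatFunc ℚ |
      p.1 ≠ 0 ∧ p.2.1 ≠ 0 ∧
      (p.1 + a + b / p.1) ^ 2 ≠ (p.2.1 ^ 2 + c * p.2.1 + d + e / p.2.1) ^ 2 ∧
      p.2.2 ^ 2 = (p.1 + a + b / p.1) ^ 2
        - (p.2.1 ^ 2 + c * p.2.1 + d + e / p.2.1) ^ 2}.Infinite := by
  right
  change (diffSolutions (a : RatFunc ℚ) b c d e).Infinite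
  -- `RatFunc.transcendental_X` is stated for the `ℚ`-algebra structure coming from `ℚ[X]`.
  have hX : Transcendental ℚ (RatFunc.X : RatFunc ℚ) := by
    convert RatFunc.transcendental_X
    exact Subsingleton.elim _ _
  have hXn (n : ℕ) : Transcendental ℚ (RatFunc.X + (n : RatFunc ℚ)) := by
    simpa using hX.add_algebraMap n
  refine Set.infinite_of_injective_forall_mem
    (f := fun n : ℕ ↦ diffSolution (a : RatFunc ℚ) b c d e (RatFunc.X + (n : RatFunc ℚ)))
    (fun m n h ↦ ?_) fun n ↦ ?_
  · simpa [diffSolution] using congrArg (·.2.1) h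
  · simpa using diffSolution_mem_diffSolutions (a := (a : ℚ)) (by simpa using ha) b c d e (hXn n)

/-- Theorem 1.1 of Zhang–Zargar: for `f(x) = x + a + b/x` and
`g(y) = y^2 + c*y + d + e/y` with nonzero integers `a,b,c,d,e`, the equation
`z^2 = f(x)^2 + g(y)^2` or the equation `z^2 = f(x)^2 - g(y)^2` has infinitely
many nontrivial solutions in `ℚ(T)`. -/
theorem stmt0 (a b c d e : ℤ) (ha : a ≠ 0) (hb : b ≠ 0) (hc : c ≠ 0)
    (hd : d ≠ 0) (he : e ≠ 0) :
    {p : RatFunc ℚ × RatFunc ℚ × RatFunc ℚ |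
      p.1 ≠ 0 ∧ p.2.1 ≠ 0 ∧
      (p.1 + a + b / p.1) * (p.2.1 ^ 2 + c * p.2.1 + d + e / p.2.1) ≠ 0 ∧
      p.2.2 ^ 2 = (p.1 + a + b / p.1) ^ 2
        + (p.2.1 ^ 2 + c * p.2.1 + d + e / p.2.1) ^ 2}.Infinite ∨
    {p : RatFunc ℚ × RatFunc ℚ × RatFunc ℚ |
      p.1 ≠ 0 ∧ p.2.1 ≠ 0 ∧
      (p.1 + a + b / p.1) ^ 2 ≠ (p.2.1 ^ 2 + c * p.2.1 + d + e / p.2.1) ^ 2 ∧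
      p.2.2 ^ 2 = (p.1 + a + b / p.1) ^ 2
        - (p.2.1 ^ 2 + c * p.2.1 + d + e / p.2.1) ^ 2}.Infinite :=
  stmt0_general a b c d e ha
end

section
/- Let a, b, c, d, e be nonzero integers. Define the Laurent polynomials f(x) = x + a + b/x and g(y) = y + c + d/y + e/y^2. Then either the equation z^2 = f(x)^2 + g(y)^2 has infinitely many nontrivial solutions (x, y, z) in the rational function field ℚ(T) with x ≠ 0, y ≠ 0 and f(x)·g(y) ≠ 0, or the equation z^2 = f(x)^2 - g(y)^2 has infinitely many nontrivial solutions (x, y, z) in ℚ(T) with x ≠ 0, y ≠ 0 and f(x)^2 ≠ g(y)^2. -/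
/-!
For any `A, B, x` with `x ≠ 0` one has `(x + A + B/x)² - (x - A - B/x)² = 4(Ax + B)`. Hence for
every `G`, the choice `x = (G² - 4B)/(4A)` turns `(x + A + B/x)² - G²` into the square
`(x - A - B/x)²`, so `z² = f(x)² - g(y)²` is solvable for every `y`. The solution is nontrivial as
soon as `G² ≠ 4B` and `(G² - 4B)² ≠ 4A²G²`. For `G = g(y)` these two conditions, multiplied by a
power of `y`, say that certain monic polynomials do not vanish at `y`, which holds for each of the
infinitely many transcendental `y = T + n ∈ ℚ(T)`.
-/

open Polynomial

theorem Transcendental.ne_zero {R A : Type*} [CommRing R] [Nontrivial R] [Ring A] [Algebra R A]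
    {y : A} (hy : Transcendental R y) : y ≠ 0 := by
  rintro rfl
  exact hy isAlgebraic_zero

theorem Transcendental.ne_zero_of_aeval_eq_pow_mul {R A : Type*} [CommRing R] [Ring A]
    [Algebra R A] {y : A} (hy : Transcendental R y) {p : R[X]} (hp : p ≠ 0) {k : ℕ} {t : A}
    (h : Polynomial.aeval y p = y ^ k * t) : t ≠ 0 := by
  rintro rfl
  exact hy ⟨p, hp, by rw [h, mul_zero]⟩

theorem Transcendental.add_natCast {R A : Type*} [CommRing R] [Nontrivial R] [Ring A]
    [Algebra R A] {x : A} (hx : Transcendental R x) (n : ℕ) : Transcendental R (x + n) := by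
  have h := hx.aeval (X + C (n : R)) (by rw [natDegree_X_add_C]; exact one_ne_zero)
    (by rw [leadingCoeff_X_add_C]; exact one_mem _)
  simpa using h

theorem RatFunc.infinite_setOf_transcendental :
    {y : RatFunc ℚ | Transcendental ℚ y}.Infinite := by
  -- `RatFunc.transcendental_X` is about the `ℚ`-algebra structure induced from `ℚ[X]`, not the
  -- default one; they agree because `Algebra ℚ _` is a subsingleton.
  have hX : Transcendental ℚ (RatFunc.X : RatFunc ℚ) := by
    convert RatFunc.transcendental_X (K := ℚ)
    exact Subsingleton.elim _ _
  refine (Set.infinite_range_of_injective (f := fun n : ℕ => RatFunc.X + (n : RatFunc ℚ))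
    fun m n h => Nat.cast_injective (add_left_cancel h)).mono ?_
  rintro _ ⟨n, rfl⟩
  exact hX.add_natCast n

section Field

variable {K : Type*} [Field K]

theorem add_sq_sub_sq_sub_eq (A B : K) {x : K} (hx : x ≠ 0) :
    (x + A + B / x) ^ 2 - (x - A - B / x) ^ 2 = 4 * (A * x + B) := by
  field_simp
  ring

theorem exists_sq_eq_sq_sub_sq (A B G : K) (hA : 4 * A ≠ 0) (hG : G ^ 2 - 4 * B ≠ 0)
    (hGA : (G ^ 2 - 4 * B) ^ 2 - 4 * A ^ 2 * G ^ 2 ≠ 0) :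
    ∃ x z : K, x ≠ 0 ∧ (x + A + B / x) ^ 2 ≠ G ^ 2 ∧ z ^ 2 = (x + A + B / x) ^ 2 - G ^ 2 := by
  obtain ⟨x, hxG⟩ : ∃ x, 4 * A * x = G ^ 2 - 4 * B := ⟨_, mul_div_cancel₀ _ hA⟩
  have hx : x ≠ 0 := by rintro rfl; simp_all
  have hGA' : (G ^ 2 - 4 * B) ^ 2 - 4 * A ^ 2 * G ^ 2 = 16 * A ^ 2 * (x * (x - A - B / x)) := by
    rw [mul_sub, mul_div_cancel₀ _ hx]
    linear_combination (4 * A ^ 2 - (G ^ 2 - 4 * B) - 4 * A * x) * hxG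
  have hz : x - A - B / x ≠ 0 := right_ne_zero_of_mul (right_ne_zero_of_mul (hGA' ▸ hGA))
  have key : (x - A - B / x) ^ 2 = (x + A + B / x) ^ 2 - G ^ 2 := by
    linear_combination -add_sq_sub_sq_sub_eq A B hx - hxG
  refine ⟨x, _, hx, fun h => hz (pow_eq_zero_iff two_ne_zero |>.mp ?_), key⟩
  rw [key, h, sub_self]

variable [Algebra ℚ K] {y : K}

theorem aeval_cubic_eq_sq_mul (c d e : ℤ) (hy : y ≠ 0) :
    aeval y (X ^ 3 + (c : ℚ[X]) * X ^ 2 + (d : ℚ[X]) * X + (e : ℚ[X]))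
      = y ^ 2 * (y + c + d / y + e / y ^ 2) := by
  simp only [map_add, map_mul, map_pow, map_intCast, aeval_X]
  field_simp

variable (hy : Transcendental ℚ y) (a b c d e : ℤ)
include hy

theorem Transcendental.sq_sub_four_mul_ne_zero :
    (y + c + d / y + e / y ^ 2) ^ 2 - 4 * b ≠ 0 := by
  refine hy.ne_zero_of_aeval_eq_pow_mul (k := 4)
    (p := (X ^ 3 + (c : ℚ[X]) * X ^ 2 + (d : ℚ[X]) * X + (e : ℚ[X])) ^ 2 - 4 * (b : ℚ[X]) * X ^ 4)
    (Monic.ne_zero (by monicity!)) ?_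
  rw [map_sub, map_pow, aeval_cubic_eq_sq_mul c d e hy.ne_zero]
  simp only [map_mul, map_pow, map_intCast, map_ofNat, aeval_X]
  ring

theorem Transcendental.sq_sub_four_mul_sq_sub_ne_zero :
    ((y + c + d / y + e / y ^ 2) ^ 2 - 4 * b) ^ 2 - 4 * a ^ 2 * (y + c + d / y + e / y ^ 2) ^ 2
      ≠ 0 := by
  refine hy.ne_zero_of_aeval_eq_pow_mul (k := 8)
    (p := ((X ^ 3 + (c : ℚ[X]) * X ^ 2 + (d : ℚ[X]) * X + (e : ℚ[X])) ^ 2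
      - 4 * (b : ℚ[X]) * X ^ 4) ^ 2
      - 4 * (a : ℚ[X]) ^ 2 * (X ^ 3 + (c : ℚ[X]) * X ^ 2 + (d : ℚ[X]) * X + (e : ℚ[X])) ^ 2 * X ^ 4)
    (Monic.ne_zero (by monicity!)) ?_
  simp only [map_sub, map_mul, map_pow, aeval_cubic_eq_sq_mul c d e hy.ne_zero, map_intCast, map_ofNat,
    aeval_X]
  ring

end Field

theorem stmt1_general (a b c d e : ℤ) (ha : a ≠ 0) :
    {p : RatFunc ℚ × RatFunc ℚ × RatFunc ℚ |
      p.1 ≠ 0 ∧ p.2.1 ≠ 0 ∧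
      (p.1 + a + b / p.1) * (p.2.1 + c + d / p.2.1 + e / p.2.1 ^ 2) ≠ 0 ∧
      p.2.2 ^ 2 = (p.1 + a + b / p.1) ^ 2
        + (p.2.1 + c + d / p.2.1 + e / p.2.1 ^ 2) ^ 2}.Infinite ∨
    {p : RatFunc ℚ × RatFunc ℚ × RatFunc ℚ |
      p.1 ≠ 0 ∧ p.2.1 ≠ 0 ∧
      (p.1 + a + b / p.1) ^ 2 ≠ (p.2.1 + c + d / p.2.1 + e / p.2.1 ^ 2) ^ 2 ∧
      p.2.2 ^ 2 = (p.1 + a + b / p.1) ^ 2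
        - (p.2.1 + c + d / p.2.1 + e / p.2.1 ^ 2) ^ 2}.Infinite := by
  right
  refine Set.Infinite.of_image (fun p => p.2.1) (RatFunc.infinite_setOf_transcendental.mono ?_)
  intro y hy
  have h4a : 4 * (a : RatFunc ℚ) ≠ 0 := mul_ne_zero (by norm_num) (Int.cast_ne_zero.mpr ha)
  obtain ⟨x, z, hx, hfg, hz⟩ := exists_sq_eq_sq_sub_sq _ _ _ h4a
    (hy.sq_sub_four_mul_ne_zero b c d e) (hy.sq_sub_four_mul_sq_sub_ne_zero a b c d e)
  exact ⟨(x, y, z), ⟨hx, hy.ne_zero, hfg, hz⟩, rfl⟩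

/-- Theorem 1.2 of Zhang–Zargar: for `f(x) = x + a + b/x` and
`g(y) = y + c + d/y + e/y^2` with nonzero integers `a,b,c,d,e`, the equation
`z^2 = f(x)^2 + g(y)^2` or the equation `z^2 = f(x)^2 - g(y)^2` has infinitely
many nontrivial solutions in `ℚ(T)`. -/
theorem stmt1 (a b c d e : ℤ) (ha : a ≠ 0) (hb : b ≠ 0) (hc : c ≠ 0)
    (hd : d ≠ 0) (he : e ≠ 0) :
    {p : RatFunc ℚ × RatFunc ℚ × RatFunc ℚ |
      p.1 ≠ 0 ∧ p.2.1 ≠ 0 ∧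
      (p.1 + a + b / p.1) * (p.2.1 + c + d / p.2.1 + e / p.2.1 ^ 2) ≠ 0 ∧
      p.2.2 ^ 2 = (p.1 + a + b / p.1) ^ 2
        + (p.2.1 + c + d / p.2.1 + e / p.2.1 ^ 2) ^ 2}.Infinite ∨
    {p : RatFunc ℚ × RatFunc ℚ × RatFunc ℚ |
      p.1 ≠ 0 ∧ p.2.1 ≠ 0 ∧
      (p.1 + a + b / p.1) ^ 2 ≠ (p.2.1 + c + d / p.2.1 + e / p.2.1 ^ 2) ^ 2 ∧
      p.2.2 ^ 2 = (p.1 + a + b / p.1) ^ 2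
        - (p.2.1 + c + d / p.2.1 + e / p.2.1 ^ 2) ^ 2}.Infinite :=
  stmt1_general a b c d e ha
end

section
/- Let a, b, c, d, e be nonzero integers and work in the rational function field ℚ(T). Set D = T^6 + 2c T^5 + (c^2+2d) T^4 + (2cd+2e) T^3 + (2ce + d^2 + 4b) T^2 + 2deT + e^2, t₁ = -4abT/D, and v₁ = -T^2 t₁^2 - aT t₁ + b. Then D ≠ 0 in ℚ(T), t₁ ≠ 0, and v₁^2 = g₁(t₁), where g₁(t) = T^4 t^4 + 2a T^3 t^3 + (T^6 + 2c T^5 + (c^2+2d) T^4 + (2cd+2e) T^3 + (a^2 + 2ce + d^2 + 2b) T^2 + 2deT + e^2) t^2 + 2abT t + b^2. -/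
set_option maxHeartbeats 1000000 in
/-- The point `(t₁, v₁)` constructed by Fermat's method lies on the quartic
curve `v^2 = g₁(t)` over `ℚ(T)` (proof of Theorem 1.1 of Zhang–Zargar). -/
theorem stmt5 (a b c d e : ℤ) (ha : a ≠ 0) (hb : b ≠ 0) (hc : c ≠ 0)
    (hd : d ≠ 0) (he : e ≠ 0) :
    let T : RatFunc ℚ := RatFunc.X
    let D : RatFunc ℚ := T ^ 6 + 2 * c * T ^ 5 + (c ^ 2 + 2 * d) * T ^ 4
      + (2 * c * d + 2 * e) * T ^ 3 + (2 * c * e + d ^ 2 + 4 * b) * T ^ 2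
      + 2 * d * e * T + e ^ 2
    let t₁ : RatFunc ℚ := -4 * a * b * T / D
    let v₁ : RatFunc ℚ := -T ^ 2 * t₁ ^ 2 - a * T * t₁ + b
    D ≠ 0 ∧ t₁ ≠ 0 ∧
      v₁ ^ 2 = T ^ 4 * t₁ ^ 4 + 2 * a * T ^ 3 * t₁ ^ 3
        + (T ^ 6 + 2 * c * T ^ 5 + (c ^ 2 + 2 * d) * T ^ 4
            + (2 * c * d + 2 * e) * T ^ 3
            + (a ^ 2 + 2 * c * e + d ^ 2 + 2 * b) * T ^ 2
            + 2 * d * e * T + e ^ 2) * t₁ ^ 2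
        + 2 * a * b * T * t₁ + b ^ 2 := by
  intro T D t₁ v₁
  haveI : CharZero (RatFunc ℚ) :=
    charZero_of_injective_algebraMap (algebraMap ℚ (RatFunc ℚ)).injective
  have hT : (T : RatFunc ℚ) ≠ 0 := RatFunc.X_ne_zero
  set p : Polynomial ℚ := Polynomial.X ^ 6
      + Polynomial.C (2 * (c : ℚ)) * Polynomial.X ^ 5
      + Polynomial.C ((c : ℚ) ^ 2 + 2 * (d : ℚ)) * Polynomial.X ^ 4
      + Polynomial.C (2 * (c : ℚ) * (d : ℚ) + 2 * (e : ℚ)) * Polynomial.X ^ 3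
      + Polynomial.C (2 * (c : ℚ) * (e : ℚ) + (d : ℚ) ^ 2 + 4 * (b : ℚ)) * Polynomial.X ^ 2
      + Polynomial.C (2 * (d : ℚ) * (e : ℚ)) * Polynomial.X
      + Polynomial.C ((e : ℚ) ^ 2) with hp_def
  have hp : p ≠ 0 := by
    intro h
    have h6 := congrArg (fun q => Polynomial.coeff q 6) h
    simp only [hp_def, Polynomial.coeff_add, Polynomial.coeff_C_mul, Polynomial.coeff_X_pow,
      Polynomial.coeff_C, Polynomial.coeff_X, Polynomial.coeff_zero] at h6
    all_goals norm_num at h6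
  have hDp : D = algebraMap (Polynomial ℚ) (RatFunc ℚ) p := by
    simp only [hp_def, map_add, map_mul, map_pow, RatFunc.algebraMap_X, RatFunc.algebraMap_C,
      map_intCast, map_ofNat]
    all_goals push_cast
    all_goals ring
  have hD : D ≠ 0 := by
    rw [hDp]
    exact RatFunc.algebraMap_ne_zero hp
  have ha' : (a : RatFunc ℚ) ≠ 0 := Int.cast_ne_zero.mpr ha
  have hb' : (b : RatFunc ℚ) ≠ 0 := Int.cast_ne_zero.mpr hb
  have hN : (-4 * (a : RatFunc ℚ) * b * T) ≠ 0 := by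
    apply mul_ne_zero (mul_ne_zero (mul_ne_zero (by norm_num) ha') hb') hT
  have ht : t₁ ≠ 0 := div_ne_zero hN hD
  refine ⟨hD, ht, ?_⟩
  have h1 : D * t₁ = -4 * (a : RatFunc ℚ) * b * T := by
    show D * (-4 * (a : RatFunc ℚ) * b * T / D) = _
    field_simp
    all_goals ring
  simp only [v₁, D] at h1 ⊢
  linear_combination (-t₁) * h1
end

section
/- Let a, b, c, d, e be nonzero integers and work in ℚ(T). Set D = T^6 + 2c T^5 + (c^2+2d) T^4 + (2cd+2e) T^3 + (2ce + d^2 + 4b) T^2 + 2deT + e^2, t₁ = -4abT/D, x = t₁ T, y = T and z = (-T^2 t₁^2 - aT t₁ + b)/(t₁ T). Then x ≠ 0, y ≠ 0, and z^2 = f(x)^2 + g(y)^2, where f(x) = x + a + b/x and g(y) = y^2 + cy + d + e/y; i.e., (x, y, z) is a solution in ℚ(T) of z^2 = f(x)^2 + g(y)^2. -/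
/-!
The given `z` simplifies to `b/x - x - a`, which differs from `f(x) = x + a + b/x` only in the
sign of `x + a`; hence `z² = f(x)² - 4b - 4ab/x`. On the other side
`y² (g(y)² + 4b) = (y³ + cy² + dy + e)² + 4by²`, which at `y = T` is the sextic `D`. So
`z² = f(x)² + g(y)²` amounts to `x D = -4abT²`, which is how `x = t₁ T` was chosen.
-/

open Polynomial

theorem sq_sub_eq_sq_add_sq_of_mul_eq {K : Type*} [Field K] {a b c d e x y : K}
    (hx : x ≠ 0) (hy : y ≠ 0)
    (h : x * ((y ^ 3 + c * y ^ 2 + d * y + e) ^ 2 + 4 * b * y ^ 2) = -4 * a * b * y ^ 2) :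
    (b / x - x - a) ^ 2 = (x + a + b / x) ^ 2 + (y ^ 2 + c * y + d + e / y) ^ 2 := by
  field_simp
  linear_combination (-x) * h

theorem stmt6_general (a b c d e : ℤ) (ha : a ≠ 0) (hb : b ≠ 0) :
    let T : RatFunc ℚ := RatFunc.X
    let D : RatFunc ℚ := T ^ 6 + 2 * c * T ^ 5 + (c ^ 2 + 2 * d) * T ^ 4
      + (2 * c * d + 2 * e) * T ^ 3 + (2 * c * e + d ^ 2 + 4 * b) * T ^ 2
      + 2 * d * e * T + e ^ 2
    let t₁ : RatFunc ℚ := -4 * a * b * T / D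
    let x : RatFunc ℚ := t₁ * T
    let y : RatFunc ℚ := T
    let z : RatFunc ℚ := (-T ^ 2 * t₁ ^ 2 - a * T * t₁ + b) / (t₁ * T)
    x ≠ 0 ∧ y ≠ 0 ∧
      z ^ 2 = (x + a + b / x) ^ 2 + (y ^ 2 + c * y + d + e / y) ^ 2 := by
  intro T D t₁ x y z
  have hD_eq : D = (T ^ 3 + c * T ^ 2 + d * T + e) ^ 2 + 4 * b * T ^ 2 := by
    simp only [D]
    ring
  have hT : T ≠ 0 := RatFunc.X_ne_zero
  have hD : D ≠ 0 := by
    have hmonic : Monic ((X ^ 3 + C (c : ℚ) * X ^ 2 + C (d : ℚ) * X + C (e : ℚ)) ^ 2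
        + C (4 * b : ℚ) * X ^ 2) := by monicity!
    convert RatFunc.algebraMap_ne_zero hmonic.ne_zero using 1
    simp [hD_eq, T]
  have ht₁ : t₁ ≠ 0 := div_ne_zero (by simp [ha, hb, hT]) hD
  have hx : x ≠ 0 := mul_ne_zero ht₁ hT
  refine ⟨hx, hT, ?_⟩
  have hz : z = b / x - x - a := by
    simp only [z, x]
    field_simp
    ring
  rw [hz]
  refine sq_sub_eq_sq_add_sq_of_mul_eq hx hT ?_
  rw [← hD_eq]
  simp only [x, t₁, y]
  field_simp

/-- The point of `ℚ(T)` constructed in the proof of Theorem 1.1 of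
Zhang–Zargar gives a solution `(x, y, z)` of `z^2 = f(x)^2 + g(y)^2` with
`f(x) = x + a + b/x` and `g(y) = y^2 + c y + d + e/y`. -/
theorem stmt6 (a b c d e : ℤ) (ha : a ≠ 0) (hb : b ≠ 0) (hc : c ≠ 0)
    (hd : d ≠ 0) (he : e ≠ 0) :
    let T : RatFunc ℚ := RatFunc.X
    let D : RatFunc ℚ := T ^ 6 + 2 * c * T ^ 5 + (c ^ 2 + 2 * d) * T ^ 4
      + (2 * c * d + 2 * e) * T ^ 3 + (2 * c * e + d ^ 2 + 4 * b) * T ^ 2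
      + 2 * d * e * T + e ^ 2
    let t₁ : RatFunc ℚ := -4 * a * b * T / D
    let x : RatFunc ℚ := t₁ * T
    let y : RatFunc ℚ := T
    let z : RatFunc ℚ := (-T ^ 2 * t₁ ^ 2 - a * T * t₁ + b) / (t₁ * T)
    x ≠ 0 ∧ y ≠ 0 ∧
      z ^ 2 = (x + a + b / x) ^ 2 + (y ^ 2 + c * y + d + e / y) ^ 2 :=
  stmt6_general a b c d e ha hb
end

section
/- Let a, b, c, d, e be nonzero integers and work in ℚ(T). Set D = T^6 + 2c T^5 + (c^2 + 4b + 2d) T^4 + (2cd+2e) T^3 + (2ce + d^2) T^2 + 2deT + e^2, t₁ = -4abT^3/D, x = t₁ T, y = T and z = (-T^3 t₁^2 - aT^2 t₁ + bT)/(t₁ T^2). Then x ≠ 0, y ≠ 0, and z^2 = f(x)^2 + g(y)^2, where f(x) = x + a + b/x and g(y) = y + c + d/y + e/y^2; i.e., (x, y, z) is a solution in ℚ(T) of z^2 = f(x)^2 + g(y)^2. -/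
/-!
Write `g(T) = (T^3 + cT^2 + dT + e)/T^2`, so that `D = T^4 (g(T)^2 + 4b)` and hence
`x = -4ab / (g(T)^2 + 4b)`. Moreover `z = -x - a + b/x`, and for this `z` one has
`f(x)^2 - z^2 = 4b(x + a)/x = 4b + 4ab/x`, which for the above `x` equals `-g(T)^2`.
-/

section Field

variable {K : Type*} [Field K]

theorem sq_eq_sq_add_of_mul_add_eq {a b w x : K} (hx : x ≠ 0)
    (h : x * (w + 4 * b) = -4 * a * b) :
    (-x - a + b / x) ^ 2 = (x + a + b / x) ^ 2 + w := by
  field_simp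
  linear_combination (-x) * h

theorem sextic_eq_pow_four_mul {T b c d e : K} (hT : T ≠ 0) :
    T ^ 6 + 2 * c * T ^ 5 + (c ^ 2 + 4 * b + 2 * d) * T ^ 4
      + (2 * c * d + 2 * e) * T ^ 3 + (2 * c * e + d ^ 2) * T ^ 2 + 2 * d * e * T + e ^ 2
      = T ^ 4 * ((T + c + d / T + e / T ^ 2) ^ 2 + 4 * b) := by
  field_simp
  ring

end Field

open Polynomial in
theorem sextic_ne_zero (b c d e : ℤ) :
    let T : RatFunc ℚ := RatFunc.X
    T ^ 6 + 2 * c * T ^ 5 + (c ^ 2 + 4 * b + 2 * d) * T ^ 4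
      + (2 * c * d + 2 * e) * T ^ 3 + (2 * c * e + d ^ 2) * T ^ 2 + 2 * d * e * T + e ^ 2 ≠ 0 := by
  have hP : (X ^ 6 + 2 * (c : ℚ[X]) * X ^ 5
      + ((c : ℚ[X]) ^ 2 + 4 * (b : ℚ[X]) + 2 * (d : ℚ[X])) * X ^ 4
      + (2 * (c : ℚ[X]) * (d : ℚ[X]) + 2 * (e : ℚ[X])) * X ^ 3
      + (2 * (c : ℚ[X]) * (e : ℚ[X]) + (d : ℚ[X]) ^ 2) * X ^ 2
      + 2 * (d : ℚ[X]) * (e : ℚ[X]) * X + (e : ℚ[X]) ^ 2).Monic := by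
    monicity!
  convert (map_ne_zero_iff _ (RatFunc.algebraMap_injective ℚ)).mpr hP.ne_zero
  simp only [map_add, map_mul, map_pow, map_intCast, map_ofNat, RatFunc.algebraMap_X]

theorem stmt9_general (a b c d e : ℤ) (ha : a ≠ 0) (hb : b ≠ 0) :
    let T : RatFunc ℚ := RatFunc.X
    let D : RatFunc ℚ := T ^ 6 + 2 * c * T ^ 5 + (c ^ 2 + 4 * b + 2 * d) * T ^ 4
      + (2 * c * d + 2 * e) * T ^ 3 + (2 * c * e + d ^ 2) * T ^ 2
      + 2 * d * e * T + e ^ 2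
    let t₁ : RatFunc ℚ := -4 * a * b * T ^ 3 / D
    let x : RatFunc ℚ := t₁ * T
    let y : RatFunc ℚ := T
    let z : RatFunc ℚ := (-T ^ 3 * t₁ ^ 2 - a * T ^ 2 * t₁ + b * T) / (t₁ * T ^ 2)
    x ≠ 0 ∧ y ≠ 0 ∧
      z ^ 2 = (x + a + b / x) ^ 2 + (y + c + d / y + e / y ^ 2) ^ 2 := by
  intro T D t₁ x y z
  have hT : T ≠ 0 := RatFunc.X_ne_zero
  have hD : D ≠ 0 := sextic_ne_zero b c d e
  have hx : x * ((T + c + d / T + e / T ^ 2) ^ 2 + 4 * b) = -4 * a * b := by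
    have hD' : D = T ^ 4 * ((T + c + d / T + e / T ^ 2) ^ 2 + 4 * b) :=
      sextic_eq_pow_four_mul hT
    rw [← mul_right_inj' (pow_ne_zero 4 hT), mul_left_comm, ← hD']
    simp only [x, t₁]
    field_simp
  have hx0 : x ≠ 0 := by
    rintro h
    simp only [h, zero_mul, zero_eq_mul, Int.cast_eq_zero] at hx
    norm_num [ha, hb] at hx
  have hz : z = -x - a + b / x := by
    have ht₁ : t₁ ≠ 0 := left_ne_zero_of_mul hx0
    simp only [z, x]
    field_simp
  exact ⟨hx0, hT, hz ▸ sq_eq_sq_add_of_mul_add_eq hx0 hx⟩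

/-- The point of `ℚ(T)` constructed in the proof of Theorem 1.2 of
Zhang–Zargar gives a solution `(x, y, z)` of `z^2 = f(x)^2 + g(y)^2` with
`f(x) = x + a + b/x` and `g(y) = y + c + d/y + e/y^2`. -/
theorem stmt9 (a b c d e : ℤ) (ha : a ≠ 0) (hb : b ≠ 0) (hc : c ≠ 0)
    (hd : d ≠ 0) (he : e ≠ 0) :
    let T : RatFunc ℚ := RatFunc.X
    let D : RatFunc ℚ := T ^ 6 + 2 * c * T ^ 5 + (c ^ 2 + 4 * b + 2 * d) * T ^ 4
      + (2 * c * d + 2 * e) * T ^ 3 + (2 * c * e + d ^ 2) * T ^ 2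
      + 2 * d * e * T + e ^ 2
    let t₁ : RatFunc ℚ := -4 * a * b * T ^ 3 / D
    let x : RatFunc ℚ := t₁ * T
    let y : RatFunc ℚ := T
    let z : RatFunc ℚ := (-T ^ 3 * t₁ ^ 2 - a * T ^ 2 * t₁ + b * T) / (t₁ * T ^ 2)
    x ≠ 0 ∧ y ≠ 0 ∧
      z ^ 2 = (x + a + b / x) ^ 2 + (y + c + d / y + e / y ^ 2) ^ 2 :=
  stmt9_general a b c d e ha hb
end

section
/- Let a, b, c, d, e be integers with a ≠ 0 and d ≠ 0, and let K be a field of characteristic zero containing ℚ (e.g. K = ℚ). For every nonzero T ∈ K one has the identity a^4 T^2 (f(T)^2 + g(dT/a)^2) = (T+a)^2 (T+c)^2 ((a^4 + d^4) T^2 + (2a^4 b + 2a d^3 e) T + a^2 (a^2 b^2 + d^2 e^2)), where f(x) = (x+a)(x+b)(x+c)/x and g(y) = (y+d)(y+e)(y + cd/a)/y. -/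
/-!
Clearing denominators in `f(T)` costs `T`, and in `g(dT/a)` it costs `a² T`, because each factor of
`g(dT/a)` is a rescaling of a linear form in `T`: `dT/a + d = d(T + a)/a` and `dT/a + cd/a = d(T + c)/a`.
Hence `a⁴T²(f(T)² + g(dT/a)²) = (T + a)²(T + c)²(a⁴(T + b)² + d²(dT + ae)²)`, and expanding the last
factor gives the quadratic on the right.
-/

section

variable {K : Type*} [Field K]

/-- `f = cubicQuot a b c` and `g = cubicQuot d e (c * d / a)`. -/
def cubicQuot (a b c x : K) : K := (x + a) * (x + b) * (x + c) / x

theorem mul_cubicQuot (a b c : K) {x : K} (hx : x ≠ 0) :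
    x * cubicQuot a b c x = (x + a) * (x + b) * (x + c) :=
  mul_div_cancel₀ _ hx

theorem mul_cubicQuot_rescale (c d e : K) {a T : K} (ha : a ≠ 0) (hT : T ≠ 0) :
    a ^ 2 * T * cubicQuot d e (c * d / a) (d * T / a) =
      d * (T + a) * (T + c) * (d * T + a * e) := by
  by_cases hd : d = 0
  · simp [cubicQuot, hd]
  · unfold cubicQuot
    field_simp

end

theorem stmt10_general (a b c d e : ℤ) (ha : a ≠ 0)
    (K : Type*) [Field K] [CharZero K] (T : K) (hT : T ≠ 0) :
    (a : K) ^ 4 * T ^ 2 *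
        (((T + a) * (T + b) * (T + c) / T) ^ 2
          + ((d * T / a + d) * (d * T / a + e) * (d * T / a + c * d / a)
              / (d * T / a)) ^ 2) =
      (T + a) ^ 2 * (T + c) ^ 2 *
        ((a ^ 4 + d ^ 4) * T ^ 2 + (2 * a ^ 4 * b + 2 * a * d ^ 3 * e) * T
          + a ^ 2 * (a ^ 2 * b ^ 2 + d ^ 2 * e ^ 2)) := by
  have ha' : (a : K) ≠ 0 := Int.cast_ne_zero.mpr ha
  change (a : K) ^ 4 * T ^ 2 * (cubicQuot (a : K) b c T ^ 2
      + cubicQuot (d : K) e (c * d / a) (d * T / a) ^ 2) = _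
  calc _ = (a : K) ^ 4 * (T * cubicQuot (a : K) b c T) ^ 2
          + ((a : K) ^ 2 * T * cubicQuot (d : K) e (c * d / a) (d * T / a)) ^ 2 := by ring
    _ = _ := by rw [mul_cubicQuot _ _ _ hT, mul_cubicQuot_rescale _ _ _ ha' hT]; ring

/-- The identity `a^4 T^2 (f(T)^2 + g(dT/a)^2) = (T+a)^2 (T+c)^2 ((a^4+d^4)T^2
+ (2a^4 b + 2a d^3 e) T + a^2(a^2 b^2 + d^2 e^2))` from the proof of
Theorem 1.3 of Zhang–Zargar. -/
theorem stmt10 (a b c d e : ℤ) (ha : a ≠ 0) (hd : d ≠ 0)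
    (K : Type*) [Field K] [CharZero K] (T : K) (hT : T ≠ 0) :
    (a : K) ^ 4 * T ^ 2 *
        (((T + a) * (T + b) * (T + c) / T) ^ 2
          + ((d * T / a + d) * (d * T / a + e) * (d * T / a + c * d / a)
              / (d * T / a)) ^ 2) =
      (T + a) ^ 2 * (T + c) ^ 2 *
        ((a ^ 4 + d ^ 4) * T ^ 2 + (2 * a ^ 4 * b + 2 * a * d ^ 3 * e) * T
          + a ^ 2 * (a ^ 2 * b ^ 2 + d ^ 2 * e ^ 2)) :=
  stmt10_general a b c d e ha K T hT
end

section
/- Let a, b, d, e be integers. For every rational number r with r^2 ≠ a^4 + d^4, the rational numbers T = (b r^2 + 2d(ae - bd) r - a^4 b - 2a d^3 e + b d^4)/(a^4 + d^4 - r^2) and S = d (r^2 - 2d^2 r + a^4 + d^4)(ae - bd)/(a^4 + d^4 - r^2) satisfy the conic equation (a^4 + d^4) T^2 + (2a^4 b + 2a d^3 e) T + a^2 (a^2 b^2 + d^2 e^2) = S^2. -/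
/-- The parametrization of the conic `(a^4+d^4)T^2 + (2a^4 b + 2a d^3 e)T
+ a^2(a^2 b^2 + d^2 e^2) = S^2` from the proof of Theorem 1.3 of
Zhang–Zargar. -/
theorem stmt11 (a b d e : ℤ) (r : ℚ) (hr : r ^ 2 ≠ (a : ℚ) ^ 4 + d ^ 4) :
    let T : ℚ := (b * r ^ 2 + 2 * d * (a * e - b * d) * r - a ^ 4 * b
      - 2 * a * d ^ 3 * e + b * d ^ 4) / (a ^ 4 + d ^ 4 - r ^ 2)
    let S : ℚ := d * (r ^ 2 - 2 * d ^ 2 * r + a ^ 4 + d ^ 4) * (a * e - b * d)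
      / (a ^ 4 + d ^ 4 - r ^ 2)
    (a ^ 4 + d ^ 4) * T ^ 2 + (2 * a ^ 4 * b + 2 * a * d ^ 3 * e) * T
      + a ^ 2 * (a ^ 2 * b ^ 2 + d ^ 2 * e ^ 2) = S ^ 2 := by
  intro T S
  have h : (a:ℚ) ^ 4 + d ^ 4 - r ^ 2 ≠ 0 := fun h => hr (by linarith [sub_eq_zero.mp h])
  simp only [T, S]
  field_simp
  ring
end

section
/- Let a, b, c, d, e be nonzero integers. For every rational number r with r^2 ≠ a^4 + d^4, set x = (b r^2 + 2d(ae - bd) r - a^4 b - 2a d^3 e + b d^4)/(a^4 + d^4 - r^2) and y = (d/a)·x. If x ≠ 0, then there exists a rational number z with z^2 = f(x)^2 + g(y)^2, where f(x) = (x+a)(x+b)(x+c)/x and g(y) = (y+d)(y+e)(y + cd/a)/y. -/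
/-!
With `y = (d/a) x`, the factors `y + d`, `y + cd/a`, `y` of `g(y)` are `d/a` times `x + a`, `x + c`,
`x`, so `f(x)² + g(y)²` is the square `((x+a)(x+c)/(a²x))²` times the quadratic
`a⁴(x+b)² + (d²x + ade)²`. The conic `w² = a⁴(x+b)² + (d²x + ade)²` has the rational point
`(x, w) = (-b, d(ae - bd))`; the line of slope `r` through it meets the conic again at the given `x`.
-/

section

variable {K : Type*} [Field K]

theorem sq_add_sq_eq_mul_conic (a b c d e x : K) (ha : a ≠ 0) (hx : x ≠ 0) :
    ((x + a) * (x + b) * (x + c) / x) ^ 2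
        + ((d / a * x + d) * (d / a * x + e) * (d / a * x + c * d / a) / (d / a * x)) ^ 2
      = ((x + a) * (x + c) / (a ^ 2 * x)) ^ 2
          * (a ^ 4 * (x + b) ^ 2 + (d ^ 2 * x + a * d * e) ^ 2) := by
  field_simp

theorem conic_second_intersection (a b d e r : K) (hr : a ^ 4 + d ^ 4 - r ^ 2 ≠ 0) :
    let x := (b * r ^ 2 + 2 * d * (a * e - b * d) * r - a ^ 4 * b
      - 2 * a * d ^ 3 * e + b * d ^ 4) / (a ^ 4 + d ^ 4 - r ^ 2)
    a ^ 4 * (x + b) ^ 2 + (d ^ 2 * x + a * d * e) ^ 2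
      = (r * (x + b) + d * (a * e - b * d)) ^ 2 := by
  intro x
  simp only [x]
  field_simp
  ring

end

theorem stmt12_general (a b c d e : ℤ) (ha : a ≠ 0)
    (r : ℚ) (hr : r ^ 2 ≠ (a : ℚ) ^ 4 + d ^ 4) :
    let x : ℚ := (b * r ^ 2 + 2 * d * (a * e - b * d) * r - a ^ 4 * b
      - 2 * a * d ^ 3 * e + b * d ^ 4) / (a ^ 4 + d ^ 4 - r ^ 2)
    let y : ℚ := (d / a) * x
    x ≠ 0 →
      ∃ z : ℚ, z ^ 2 = ((x + a) * (x + b) * (x + c) / x) ^ 2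
        + ((y + d) * (y + e) * (y + c * d / a) / y) ^ 2 := by
  intro x y hx
  have hconic := conic_second_intersection (a : ℚ) b d e r (sub_ne_zero.mpr hr.symm)
  refine ⟨(x + a) * (x + c) / (a ^ 2 * x) * (r * (x + b) + d * (a * e - b * d)), ?_⟩
  rw [sq_add_sq_eq_mul_conic _ _ _ _ _ _ (Int.cast_ne_zero.mpr ha) hx,
    hconic, mul_pow]

/-- The rational point produced in the proof of Theorem 1.3 of Zhang–Zargar
gives a rational solution of `z^2 = f(x)^2 + g(y)^2`, where
`f(x) = (x+a)(x+b)(x+c)/x` and `g(y) = (y+d)(y+e)(y+cd/a)/y`. -/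
theorem stmt12 (a b c d e : ℤ) (ha : a ≠ 0) (hb : b ≠ 0) (hc : c ≠ 0)
    (hd : d ≠ 0) (he : e ≠ 0) (r : ℚ) (hr : r ^ 2 ≠ (a : ℚ) ^ 4 + d ^ 4) :
    let x : ℚ := (b * r ^ 2 + 2 * d * (a * e - b * d) * r - a ^ 4 * b
      - 2 * a * d ^ 3 * e + b * d ^ 4) / (a ^ 4 + d ^ 4 - r ^ 2)
    let y : ℚ := (d / a) * x
    x ≠ 0 →
      ∃ z : ℚ, z ^ 2 = ((x + a) * (x + b) * (x + c) / x) ^ 2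
        + ((y + d) * (y + e) * (y + c * d / a) / y) ^ 2 :=
  stmt12_general a b c d e ha r hr
end

section
/- Let a, b, c, d, e be integers with a ≠ 0 and d ≠ 0, and let K be a field of characteristic zero. For every nonzero T ∈ K one has the identity a^2 T^4 (f(T)^2 + g(dT/a)^2) = (T+a)^2 (T+c)^2 (a^2 T^4 + 2a^2 b T^3 + (a^2 b^2 + d^2) T^2 + 2ade T + a^2 e^2), where f(x) = (x+a)(x+b)(x+c)/x and g(y) = (y+d)(y+e)(y + cd/a)/y^2. -/
/-!
Substituting `y = dT/a` clears the denominator of `g`: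
`g(dT/a) = (T + a)(dT + ae)(T + c) / (aT²)`. Hence both `aT² f(T)` and `aT² g(dT/a)` are
divisible by `(T + a)(T + c)`, with cofactors `aT(T + b)` and `dT + ae`, and the quartic on the
right is `(aT(T + b))² + (dT + ae)²`.
-/

section Field

variable {K : Type*} [Field K]

theorem rescaled_g_eq (a c d e T : K) (ha : a ≠ 0) (hd : d ≠ 0) (hT : T ≠ 0) :
    (d * T / a + d) * (d * T / a + e) * (d * T / a + c * d / a) / (d * T / a) ^ 2 =
      (T + a) * (d * T + a * e) * (T + c) / (a * T ^ 2) := by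
  field_simp

theorem sq_f_add_sq_rescaled_g (a b c d e T : K) (ha : a ≠ 0) (hd : d ≠ 0) (hT : T ≠ 0) :
    a ^ 2 * T ^ 4 *
        (((T + a) * (T + b) * (T + c) / T) ^ 2
          + ((d * T / a + d) * (d * T / a + e) * (d * T / a + c * d / a)
              / (d * T / a) ^ 2) ^ 2) =
      (T + a) ^ 2 * (T + c) ^ 2 * ((a * T * (T + b)) ^ 2 + (d * T + a * e) ^ 2) := by
  rw [rescaled_g_eq a c d e T ha hd hT]
  field_simp

end Field

/-- The identity `a^2 T^4 (f(T)^2 + g(dT/a)^2) = (T+a)^2 (T+c)^2 (a^2 T^4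
+ 2a^2 b T^3 + (a^2 b^2 + d^2) T^2 + 2ade T + a^2 e^2)` from the proof of
Theorem 1.4 of Zhang–Zargar. -/
theorem stmt13 (a b c d e : ℤ) (ha : a ≠ 0) (hd : d ≠ 0)
    (K : Type*) [Field K] [CharZero K] (T : K) (hT : T ≠ 0) :
    (a : K) ^ 2 * T ^ 4 *
        (((T + a) * (T + b) * (T + c) / T) ^ 2
          + ((d * T / a + d) * (d * T / a + e) * (d * T / a + c * d / a)
              / (d * T / a) ^ 2) ^ 2) =
      (T + a) ^ 2 * (T + c) ^ 2 *
        (a ^ 2 * T ^ 4 + 2 * a ^ 2 * b * T ^ 3 + (a ^ 2 * b ^ 2 + d ^ 2) * T ^ 2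
          + 2 * a * d * e * T + a ^ 2 * e ^ 2) := by
  rw [sq_f_add_sq_rescaled_g (a : K) b c d e T (Int.cast_ne_zero.mpr ha)
    (Int.cast_ne_zero.mpr hd) hT]
  ring
end

section
/- Let a, b, d, e be integers with 2a^2 e + d^2 ≠ 0. Then the rational numbers T₁ = -2ae(ab + d)/(2a^2 e + d^2) and S₁ = ae(4a^4 e^2 - 4a^3 b d e + 2a^2 b^2 d^2 + 2a b d^3 + d^4)/(2a^2 e + d^2)^2 satisfy the quartic equation a^2 T₁^4 + 2a^2 b T₁^3 + (a^2 b^2 + d^2) T₁^2 + 2ade T₁ + a^2 e^2 = S₁^2. -/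
theorem quartic_eq_sq_of_fermat_point {K : Type*} [Field K] (a b d e : K)
    (h : 2 * a ^ 2 * e + d ^ 2 ≠ 0) :
    let T : K := -2 * a * e * (a * b + d) / (2 * a ^ 2 * e + d ^ 2)
    let S : K := a * e * (4 * a ^ 4 * e ^ 2 - 4 * a ^ 3 * b * d * e
      + 2 * a ^ 2 * b ^ 2 * d ^ 2 + 2 * a * b * d ^ 3 + d ^ 4)
      / (2 * a ^ 2 * e + d ^ 2) ^ 2
    a ^ 2 * T ^ 4 + 2 * a ^ 2 * b * T ^ 3 + (a ^ 2 * b ^ 2 + d ^ 2) * T ^ 2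
      + 2 * a * d * e * T + a ^ 2 * e ^ 2 = S ^ 2 := by
  intro T S
  simp only [T, S]
  -- a name for the denominator keeps `field_simp` from renormalising it away from `h`
  generalize hD : 2 * a ^ 2 * e + d ^ 2 = D at h ⊢
  field_simp
  subst hD
  ring

/-- The point `(T₁, S₁)` constructed by Fermat's method lies on the quartic
curve `a^2 T^4 + 2a^2 b T^3 + (a^2 b^2 + d^2) T^2 + 2ade T + a^2 e^2 = S^2`
(proof of Theorem 1.4 of Zhang–Zargar). -/
theorem stmt14 (a b d e : ℤ) (h : 2 * a ^ 2 * e + d ^ 2 ≠ 0) :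
    let T₁ : ℚ := -2 * a * e * (a * b + d) / (2 * a ^ 2 * e + d ^ 2)
    let S₁ : ℚ := a * e * (4 * a ^ 4 * e ^ 2 - 4 * a ^ 3 * b * d * e
      + 2 * a ^ 2 * b ^ 2 * d ^ 2 + 2 * a * b * d ^ 3 + d ^ 4)
      / (2 * a ^ 2 * e + d ^ 2) ^ 2
    a ^ 2 * T₁ ^ 4 + 2 * a ^ 2 * b * T₁ ^ 3 + (a ^ 2 * b ^ 2 + d ^ 2) * T₁ ^ 2
      + 2 * a * d * e * T₁ + a ^ 2 * e ^ 2 = S₁ ^ 2 :=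
  quartic_eq_sq_of_fermat_point (a : ℚ) b d e (by exact_mod_cast h)
end
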